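/- arXiv:2002.10288 — 3 statements merged into one kernel-verified Lean document; each statement's English description precedes it below -/
import Mathlib

section
/- Let A be a real symmetric tensor of even order k and dimension n. Then λ_min(A) = min{ A x^k : x ∈ ℝ^n, ||x||_k = 1 }, where λ_min(A) denotes the least H-eigenvalue of A, A x^k = Σ a_{i1...ik} x_{i1}···x_{ik}, and ||x||_k = (Σ |x_i|^k)^{1/k}. Moreover, x attains the minimum if and only if x is an eigenvector of A associated with λ_min(A). -/
open Finset BigOperators

/-- The value `A x^k = ∑ a_{i1...ik} x_{i1} ⋯ x_{ik}` of a tensor on a vector. -/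
def tApply {n k : ℕ} (A : (Fin k → Fin n) → ℝ) (x : Fin n → ℝ) : ℝ :=
  ∑ f : Fin k → Fin n, A f * ∏ j, x (f j)

/-- A tensor is symmetric if its entries are invariant under permutations of the indices. -/
def SymT {n k : ℕ} (A : (Fin k → Fin n) → ℝ) : Prop :=
  ∀ (σ : Equiv.Perm (Fin k)) (f : Fin k → Fin n), A (f ∘ σ) = A f

/-- The H-eigenvector equation `(A x^{k-1})_i = lam * x_i^{k-1}` for all `i`. -/
def tEig {n k : ℕ} [NeZero k] (A : (Fin k → Fin n) → ℝ) (lam : ℝ) (x : Fin n → ℝ) : Prop :=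
  ∀ i : Fin n,
    (∑ f : Fin k → Fin n,
      if f 0 = i then A f * ∏ j ∈ Finset.univ.erase (0 : Fin k), x (f j) else 0)
    = lam * x i ^ (k - 1)

/-- The set of H-eigenvalues of a tensor. -/
def specT {n k : ℕ} [NeZero k] (A : (Fin k → Fin n) → ℝ) : Set ℝ :=
  {lam | ∃ x : Fin n → ℝ, x ≠ 0 ∧ tEig A lam x}

/-- The least H-eigenvalue of a tensor. -/
noncomputable def lamMinT {n k : ℕ} [NeZero k] (A : (Fin k → Fin n) → ℝ) : ℝ :=
  sInf (specT A)

/-!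
Since `k` is even, `∑ yᵢ^k` is positive off `0`, so by homogeneity the minimum `m` of `A x^k` on
the compact set `∑ xᵢ^k = 1` satisfies `m ∑ yᵢ^k ≤ A y^k` for every `y`. A point where equality
holds is an unconstrained minimum of `A y^k - m ∑ yᵢ^k`, whose gradient is, by symmetry of `A`,
`k (A x^{k-1} - m x^{[k-1]})`; so every minimizer is an H-eigenvector for `m`. Conversely,
Euler's identity `A y^k = ∑ yᵢ (A y^{k-1})ᵢ` gives `A y^k = λ ∑ yᵢ^k` for an eigenpair `(λ, y)`,
whence `m ≤ λ`, and `A y^k = m` on the sphere when `λ = m`.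
-/

section

variable {n k : ℕ}

/-- `(A x^{k-1})_i`, the left-hand side of `tEig`. -/
def tContract [NeZero k] (A : (Fin k → Fin n) → ℝ) (x : Fin n → ℝ) (i : Fin n) : ℝ :=
  ∑ f : Fin k → Fin n, if f 0 = i then A f * ∏ j ∈ univ.erase (0 : Fin k), x (f j) else 0

theorem sum_mul_tContract [NeZero k] (A : (Fin k → Fin n) → ℝ) (x v : Fin n → ℝ) :
    ∑ i, v i * tContract A x i =
      ∑ f : Fin k → Fin n, A f * ((∏ j ∈ univ.erase 0, x (f j)) * v (f 0)) := by
  simp only [tContract, mul_sum, mul_ite, mul_zero]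
  rw [sum_comm]
  refine sum_congr rfl fun f _ => ?_
  rw [sum_ite_eq]
  simp only [mem_univ, if_true]
  ring

theorem tApply_eq_sum_mul_tContract [NeZero k] (A : (Fin k → Fin n) → ℝ) (x : Fin n → ℝ) :
    tApply A x = ∑ i, x i * tContract A x i := by
  rw [sum_mul_tContract]
  refine sum_congr rfl fun f _ => ?_
  rw [← mul_prod_erase univ (fun j => x (f j)) (mem_univ 0), mul_comm (x (f 0))]

theorem tApply_eq_of_tEig [NeZero k] {A : (Fin k → Fin n) → ℝ} {lam : ℝ} {x : Fin n → ℝ}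
    (h : tEig A lam x) : tApply A x = lam * ∑ i, x i ^ k := by
  rw [tApply_eq_sum_mul_tContract, mul_sum]
  refine sum_congr rfl fun i _ => ?_
  rw [show tContract A x i = _ from h i, ← pow_sub_one_mul (NeZero.ne k)]
  ring

theorem tApply_smul (A : (Fin k → Fin n) → ℝ) (c : ℝ) (x : Fin n → ℝ) :
    tApply A (c • x) = c ^ k * tApply A x := by
  simp only [tApply, mul_sum, Pi.smul_apply, smul_eq_mul, prod_mul_distrib, prod_const,
    card_univ, Fintype.card_fin]
  exact sum_congr rfl fun f _ => by ring

theorem tApply_zero [NeZero k] (A : (Fin k → Fin n) → ℝ) : tApply A 0 = 0 := by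
  simpa [zero_pow (NeZero.ne k)] using tApply_smul A 0 0

theorem continuous_tApply (A : (Fin k → Fin n) → ℝ) : Continuous (tApply A) := by
  unfold tApply
  fun_prop

theorem SymT.sum_mul_prod_erase_mul [NeZero k] {A : (Fin k → Fin n) → ℝ} (hA : SymT A)
    (x v : Fin n → ℝ) (j : Fin k) :
    ∑ f : Fin k → Fin n, A f * ((∏ l ∈ univ.erase j, x (f l)) * v (f j)) =
      ∑ f : Fin k → Fin n, A f * ((∏ l ∈ univ.erase 0, x (f l)) * v (f 0)) := by
  set σ := Equiv.swap (0 : Fin k) j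
  refine Fintype.sum_equiv (Equiv.arrowCongr σ.symm (Equiv.refl _)) _ _ fun f => ?_
  have hprod : ∏ l ∈ univ.erase 0, x (f (σ l)) = ∏ l ∈ univ.erase j, x (f l) := by
    refine (prod_map (univ.erase 0) σ.toEmbedding (fun l => x (f l))).symm.trans ?_
    rw [map_erase, map_univ_equiv]
    simp [σ]
  change _ = A (f ∘ σ) * ((∏ l ∈ univ.erase 0, x (f (σ l))) * v (f (σ 0)))
  rw [hA σ f, hprod, Equiv.swap_apply_left]

noncomputable def tApplyDeriv (A : (Fin k → Fin n) → ℝ) (x : Fin n → ℝ) :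
    (Fin n → ℝ) →L[ℝ] ℝ :=
  ∑ f : Fin k → Fin n, A f • ∑ j, (∏ l ∈ univ.erase j, x (f l)) • ContinuousLinearMap.proj (f j)

theorem hasFDerivAt_tApply (A : (Fin k → Fin n) → ℝ) (x : Fin n → ℝ) :
    HasFDerivAt (tApply A) (tApplyDeriv A x) x :=
  HasFDerivAt.fun_sum fun f _ =>
    (HasFDerivAt.finsetProd fun j _ => hasFDerivAt_apply (f j) x).const_mul (A f)

theorem SymT.tApplyDeriv_apply [NeZero k] {A : (Fin k → Fin n) → ℝ} (hA : SymT A)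
    (x v : Fin n → ℝ) : tApplyDeriv A x v = k * ∑ i, v i * tContract A x i := by
  rw [sum_mul_tContract]
  simp only [tApplyDeriv, _root_.sum_apply, smul_apply, ContinuousLinearMap.proj_apply,
    smul_eq_mul, mul_sum]
  rw [sum_comm]
  simp only [hA.sum_mul_prod_erase_mul x v, sum_const, card_univ, Fintype.card_fin, nsmul_eq_mul]
  rw [mul_sum]

theorem SymT.tEig_of_forall_mul_sum_pow_le [NeZero k] {A : (Fin k → Fin n) → ℝ} (hA : SymT A)
    {m : ℝ} {x : Fin n → ℝ} (hle : ∀ y, m * ∑ i, y i ^ k ≤ tApply A y)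
    (hx : tApply A x = m * ∑ i, x i ^ k) : tEig A m x := by
  have hmin : IsLocalMin (fun y => tApply A y - m * ∑ i, y i ^ k) x :=
    Filter.Eventually.of_forall fun y => by linarith [hle y]
  have hderiv := (hasFDerivAt_tApply A x).sub
    ((HasFDerivAt.fun_sum (u := univ) fun i _ => (hasFDerivAt_apply i x).pow k).const_mul m)
  intro i
  have hcrit := congrArg (· (Pi.single i 1)) (hmin.hasFDerivAt_eq_zero hderiv)
  simp only [_root_.sub_apply, hA.tApplyDeriv_apply, Pi.single_apply, ite_mul, one_mul, zero_mul,
    sum_ite_eq', mem_univ, ↓reduceIte, nsmul_eq_mul, smul_apply, _root_.sum_apply,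
    ContinuousLinearMap.proj_apply, smul_eq_mul, mul_ite, mul_one, mul_zero, zero_apply] at hcrit
  change tContract A x i = m * x i ^ (k - 1)
  exact mul_left_cancel₀ (Nat.cast_ne_zero.mpr (NeZero.ne k)) (by linear_combination hcrit)

theorem sum_pow_pos (hk : Even k) {y : Fin n → ℝ} (hy : y ≠ 0) : 0 < ∑ i, y i ^ k := by
  obtain ⟨i, hi⟩ := Function.ne_iff.mp hy
  exact sum_pos' (fun j _ => hk.pow_nonneg (y j)) ⟨i, mem_univ i, hk.pow_pos hi⟩

theorem mul_sum_pow_le_tApply [NeZero k] (hk : Even k) {A : (Fin k → Fin n) → ℝ} {m : ℝ}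
    (hm : ∀ y, ∑ i, y i ^ k = 1 → m ≤ tApply A y) (y : Fin n → ℝ) :
    m * ∑ i, y i ^ k ≤ tApply A y := by
  rcases eq_or_ne y 0 with rfl | hy
  · simp [tApply_zero, zero_pow (NeZero.ne k)]
  set s := ∑ i, y i ^ k
  have hs : 0 < s := sum_pow_pos hk hy
  set c := (s ^ (k⁻¹ : ℝ))⁻¹
  have hc : c ^ k = s⁻¹ := by rw [inv_pow, Real.rpow_inv_natCast_pow hs.le (NeZero.ne k)]
  have hcy : ∑ i, (c • y) i ^ k = 1 := by
    simp only [Pi.smul_apply, smul_eq_mul, mul_pow, ← mul_sum, hc, inv_mul_cancel₀ hs.ne', s]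
  have := hm _ hcy
  rwa [tApply_smul, hc, le_inv_mul_iff₀' hs] at this

theorem le_of_mem_specT [NeZero k] (hk : Even k) {A : (Fin k → Fin n) → ℝ} {m lam : ℝ}
    (hle : ∀ y, m * ∑ i, y i ^ k ≤ tApply A y) (hlam : lam ∈ specT A) : m ≤ lam := by
  obtain ⟨y, hy, hyeig⟩ := hlam
  have := hle y
  rw [tApply_eq_of_tEig hyeig] at this
  exact le_of_mul_le_mul_right this (sum_pow_pos hk hy)

theorem isCompact_setOf_sum_pow_eq_one (hk : Even k) (hk0 : k ≠ 0) :
    IsCompact {y : Fin n → ℝ | ∑ i, y i ^ k = 1} := by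
  refine (isCompact_closedBall (0 : Fin n → ℝ) 1).of_isClosed_subset
    (isClosed_eq (by fun_prop) continuous_const) fun y hy => ?_
  rw [mem_closedBall_zero_iff, pi_norm_le_iff_of_nonneg zero_le_one]
  intro i
  rw [Real.norm_eq_abs, ← pow_le_one_iff_of_nonneg (abs_nonneg _) hk0, hk.pow_abs, ← hy]
  exact single_le_sum (fun j _ => hk.pow_nonneg (y j)) (mem_univ i)

end

/-- For a real symmetric tensor of even order `k`,
`λ_min(A) = min { A x^k : ‖x‖_k = 1 }`, and the minimum is attained exactly
at eigenvectors associated with `λ_min(A)`. -/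
theorem stmt2 {n k : ℕ} [NeZero k] (hk : Even k) (hn : 0 < n)
    (A : (Fin k → Fin n) → ℝ) (hA : SymT A) :
    IsLeast {r : ℝ | ∃ x : Fin n → ℝ, (∑ i, |x i| ^ k) = 1 ∧ tApply A x = r} (lamMinT A) ∧
    ∀ x : Fin n → ℝ, (∑ i, |x i| ^ k) = 1 →
      (tApply A x = lamMinT A ↔ tEig A (lamMinT A) x) := by
  simp_rw [hk.pow_abs]
  have hsphere : ∑ i, (Pi.single ⟨0, hn⟩ 1 : Fin n → ℝ) i ^ k = 1 := by
    simp [Pi.single_apply, zero_pow (NeZero.ne k)]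
  obtain ⟨x₀, hx₀, hmin⟩ := (isCompact_setOf_sum_pow_eq_one hk (NeZero.ne k)).exists_isMinOn
    ⟨_, hsphere⟩ (continuous_tApply A).continuousOn
  set m := tApply A x₀
  have hle : ∀ y, m * ∑ i, y i ^ k ≤ tApply A y := mul_sum_pow_le_tApply hk fun y hy => hmin hy
  have heig : ∀ x, ∑ i, x i ^ k = 1 → tApply A x = m → tEig A m x := fun x hx hxm =>
    hA.tEig_of_forall_mul_sum_pow_le hle (by rw [hx, hxm, mul_one])
  have hx₀0 : x₀ ≠ 0 := by rintro rfl; simp [zero_pow (NeZero.ne k)] at hx₀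
  have hlam : lamMinT A = m :=
    IsLeast.csInf_eq ⟨⟨x₀, hx₀0, heig x₀ hx₀ rfl⟩, fun _ => le_of_mem_specT hk hle⟩
  rw [hlam]
  refine ⟨⟨⟨x₀, hx₀, rfl⟩, ?_⟩, fun x hx => ⟨heig x hx, fun h => ?_⟩⟩
  · rintro _ ⟨y, hy, rfl⟩
    exact hmin hy
  · rw [tApply_eq_of_tEig h, hx, mul_one]
end

section
/- Let k be even and let G be a connected k-uniform hypergraph expressible as the coalescence G = G_0(u) ⋄ H(u) of two hypergraphs at a cut vertex u, where H is odd-bipartite. If x is a first eigenvector of G (a real eigenvector of A(G) associated with the least H-eigenvalue), then Π_{v ∈ e} x_v ≤ 0 for every edge e of H. -/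
open Finset BigOperators

variable {V : Type*}

/-- A `k`-uniform hypergraph given by its edge set: every edge has exactly `k` vertices. -/
def Uniform [DecidableEq V] (E : Finset (Finset V)) (k : ℕ) : Prop :=
  ∀ e ∈ E, e.card = k

/-- Two vertices are adjacent if some edge contains both. -/
def HAdj [DecidableEq V] (E : Finset (Finset V)) (a b : V) : Prop :=
  a ≠ b ∧ ∃ e ∈ E, a ∈ e ∧ b ∈ e

/-- The hypergraph is connected: every two vertices are joined by a walk. -/
def HConnected [DecidableEq V] (E : Finset (Finset V)) : Prop :=
  ∀ a b : V, Relation.ReflTransGen (HAdj E) a b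

/-- `(lam, x)` satisfies the H-eigen equations of the adjacency tensor:
for each vertex `v`, `∑_{e ∋ v} ∏_{w ∈ e \ {v}} x w = lam * (x v)^(k-1)`. -/
def isEig [Fintype V] [DecidableEq V] (E : Finset (Finset V)) (k : ℕ) (lam : ℝ) (x : V → ℝ) :
    Prop :=
  ∀ v : V, (∑ e ∈ E.filter (fun e => v ∈ e), ∏ w ∈ e.erase v, x w) = lam * x v ^ (k - 1)

/-- The set of H-eigenvalues of the adjacency tensor of the hypergraph. -/
def specH [Fintype V] [DecidableEq V] (E : Finset (Finset V)) (k : ℕ) : Set ℝ :=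
  {lam | ∃ x : V → ℝ, x ≠ 0 ∧ isEig E k lam x}

/-- The least H-eigenvalue of the adjacency tensor. -/
noncomputable def lamMin [Fintype V] [DecidableEq V] (E : Finset (Finset V)) (k : ℕ) : ℝ :=
  sInf (specH E k)

/-- A first eigenvector: a real eigenvector associated with the least H-eigenvalue. -/
def IsFirstEigvec [Fintype V] [DecidableEq V] (E : Finset (Finset V)) (k : ℕ) (x : V → ℝ) :
    Prop :=
  x ≠ 0 ∧ isEig E k (lamMin E k) x


section Aux

variable [Fintype V] [DecidableEq V]

/-- The multilinear form associated with the edge set. -/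
noncomputable def FF [DecidableEq V] (E : Finset (Finset V)) (x : V → ℝ) : ℝ :=
  ∑ e ∈ E, ∏ v ∈ e, x v

/-- The `k`-th power sum. -/
noncomputable def NN (k : ℕ) (x : V → ℝ) : ℝ := ∑ v, x v ^ k

lemma lemA {E : Finset (Finset V)} {k : ℕ}
    (hU : Uniform E k) (hk1 : 1 ≤ k) {lam : ℝ} {x : V → ℝ} (h : isEig E k lam x) :
    (k : ℝ) * FF E x = lam * NN k x := by
  have key : ∀ v : V, x v * ∑ e ∈ E.filter (fun e => v ∈ e), ∏ w ∈ e.erase v, x w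
      = lam * x v ^ k := by
    intro v
    rw [h v, ← mul_assoc, mul_comm (x v) lam, mul_assoc]
    congr 1
    rw [← pow_succ']
    congr 1
    omega
  have : ∑ v, (x v * ∑ e ∈ E.filter (fun e => v ∈ e), ∏ w ∈ e.erase v, x w)
      = lam * NN k x := by
    simp only [key, NN, Finset.mul_sum]
  rw [← this]
  have swap : ∀ v : V, x v * ∑ e ∈ E.filter (fun e => v ∈ e), ∏ w ∈ e.erase v, x w
      = ∑ e ∈ E, (if v ∈ e then ∏ w ∈ e, x w else 0) := by
    intro v
    rw [Finset.mul_sum, Finset.sum_filter]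
    refine Finset.sum_congr rfl fun e _ => ?_
    by_cases hv : v ∈ e
    · simp [hv, Finset.mul_prod_erase e x hv]
    · simp [hv]
  simp only [swap]
  rw [Finset.sum_comm]
  rw [FF, Finset.mul_sum]
  refine Finset.sum_congr rfl fun e he => ?_
  rw [Finset.sum_ite_mem, Finset.univ_inter, Finset.sum_const, ← hU e he]
  simp [mul_comm]

lemma specBdd {E : Finset (Finset V)} {k : ℕ}
    (hU : Uniform E k) : BddBelow (specH E k) := by
  refine ⟨-(E.card : ℝ), fun lam hlam => ?_⟩
  obtain ⟨x, hx0, hev⟩ := hlam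
  have hVne : Nonempty V := by
    by_contra h
    exact hx0 (funext fun v => absurd ⟨v⟩ h)
  obtain ⟨v, -, hv⟩ := Finset.exists_max_image Finset.univ (fun v => |x v|)
    ⟨Classical.arbitrary V, Finset.mem_univ _⟩
  have hvpos : 0 < |x v| := by
    rcases Function.ne_iff.mp hx0 with ⟨w, hw⟩
    exact lt_of_lt_of_le (abs_pos.mpr hw) (hv w (Finset.mem_univ w))
  have key : |lam| * |x v| ^ (k - 1) ≤ (E.card : ℝ) * |x v| ^ (k - 1) := by
    have := hev v
    have habs : |lam * x v ^ (k - 1)| ≤ (E.card : ℝ) * |x v| ^ (k - 1) := by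
      rw [← this]
      calc |∑ e ∈ E.filter (fun e => v ∈ e), ∏ w ∈ e.erase v, x w|
          ≤ ∑ e ∈ E.filter (fun e => v ∈ e), |∏ w ∈ e.erase v, x w| :=
            Finset.abs_sum_le_sum_abs _ _
        _ ≤ ∑ e ∈ E.filter (fun e => v ∈ e), |x v| ^ (k - 1) := by
            refine Finset.sum_le_sum fun e he => ?_
            rw [Finset.mem_filter] at he
            rw [abs_prod]
            have hcard : (e.erase v).card = k - 1 := by
              rw [Finset.card_erase_of_mem he.2, hU e he.1]
            calc ∏ w ∈ e.erase v, |x w| ≤ ∏ w ∈ e.erase v, |x v| :=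
                  Finset.prod_le_prod (fun w _ => abs_nonneg _)
                    (fun w _ => hv w (Finset.mem_univ w))
              _ = |x v| ^ (k - 1) := by rw [Finset.prod_const, hcard]
        _ ≤ (E.card : ℝ) * |x v| ^ (k - 1) := by
            rw [Finset.sum_const, nsmul_eq_mul]
            have : ((E.filter (fun e => v ∈ e)).card : ℝ) ≤ (E.card : ℝ) := by
              exact_mod_cast Finset.card_filter_le _ _
            exact mul_le_mul_of_nonneg_right this (pow_nonneg (abs_nonneg _) _)
    rwa [abs_mul, abs_pow] at habs
  have hppos : 0 < |x v| ^ (k - 1) := pow_pos hvpos _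
  have : |lam| ≤ (E.card : ℝ) := le_of_mul_le_mul_right (by linarith [key]) hppos
  linarith [neg_abs_le lam]

lemma NN_nonneg {k : ℕ} (hk : Even k) (z : V → ℝ) : 0 ≤ NN k z :=
  Finset.sum_nonneg fun v _ => hk.pow_nonneg _

lemma NN_pos {k : ℕ} (hk : Even k) (hk0 : 0 < k) {z : V → ℝ} (hz : z ≠ 0) : 0 < NN k z := by
  rcases (NN_nonneg hk z).lt_or_eq with h | h
  · exact h
  · exfalso
    apply hz
    funext v
    have := (Finset.sum_eq_zero_iff_of_nonneg (fun v _ => hk.pow_nonneg (z v))).mp h.symm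
    have := this v (Finset.mem_univ v)
    exact pow_eq_zero_iff hk0.ne' |>.mp this

lemma FF_zero {E : Finset (Finset V)} {k : ℕ} (hU : Uniform E k) (hk0 : 0 < k) :
    FF E (0 : V → ℝ) = 0 := by
  refine Finset.sum_eq_zero fun e he => ?_
  have : e.Nonempty := Finset.card_pos.mp (by rw [hU e he]; exact hk0)
  obtain ⟨v, hv⟩ := this
  exact Finset.prod_eq_zero hv rfl

lemma FF_smul {E : Finset (Finset V)} {k : ℕ} (hU : Uniform E k) (c : ℝ) (z : V → ℝ) :
    FF E (c • z) = c ^ k * FF E z := by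
  rw [FF, FF, Finset.mul_sum]
  refine Finset.sum_congr rfl fun e he => ?_
  rw [← hU e he]
  simp only [Pi.smul_apply, smul_eq_mul]
  rw [Finset.prod_mul_distrib, Finset.prod_const]

lemma NN_smul {k : ℕ} (c : ℝ) (z : V → ℝ) : NN k (c • z) = c ^ k * NN k z := by
  rw [NN, NN, Finset.mul_sum]
  refine Finset.sum_congr rfl fun v _ => ?_
  simp [mul_pow]

lemma FF_cont {E : Finset (Finset V)} : Continuous (FF E (V := V)) := by
  refine continuous_finset_sum _ fun e _ => ?_
  exact continuous_finset_prod _ fun v _ => continuous_apply v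

lemma NN_cont {k : ℕ} : Continuous (NN k (V := V)) := by
  refine continuous_finset_sum _ fun v _ => ?_
  exact (continuous_apply v).pow k

lemma lemB {E : Finset (Finset V)} {k : ℕ} (hU : Uniform E k) (hk : Even k) (hk0 : 0 < k)
    (hne : (specH E k).Nonempty) :
    ∀ y : V → ℝ, lamMin E k * NN k y ≤ (k : ℝ) * FF E y := by
  obtain ⟨lam0, x0, hx00, -⟩ := hne
  set Sph : Set (V → ℝ) := {z | NN k z = 1} with hSph
  have hSclosed : IsClosed Sph := isClosed_eq NN_cont continuous_const
  have hSsub : Sph ⊆ Metric.closedBall 0 1 := by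
    intro z hz
    rw [Metric.mem_closedBall, dist_zero_right]
    rw [pi_norm_le_iff_of_nonneg zero_le_one]
    intro v
    rw [Real.norm_eq_abs]
    rw [← pow_le_one_iff_of_nonneg (abs_nonneg _) hk0.ne']
    rw [Even.pow_abs hk]
    calc z v ^ k ≤ NN k z :=
      Finset.single_le_sum (fun w _ => hk.pow_nonneg (z w)) (Finset.mem_univ v)
    _ = 1 := hz
  have hScompact : IsCompact Sph :=
    (isCompact_closedBall (0 : V → ℝ) 1).of_isClosed_subset hSclosed hSsub
  have sphere_of : ∀ z : V → ℝ, 0 < NN k z → ∃ c : ℝ, 0 < c ∧ c ^ k * NN k z = 1 := by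
    intro z hz
    refine ⟨(NN k z) ^ (-(k : ℝ)⁻¹), Real.rpow_pos_of_pos hz _, ?_⟩
    have : ((NN k z) ^ (-(k : ℝ)⁻¹)) ^ k = (NN k z) ^ ((-(k:ℝ)⁻¹) * k) := by
      rw [← Real.rpow_natCast ((NN k z) ^ (-(k : ℝ)⁻¹)) k, ← Real.rpow_mul hz.le]
    rw [this]
    have hkne : (k : ℝ) ≠ 0 := Nat.cast_ne_zero.mpr hk0.ne'
    rw [neg_mul, inv_mul_cancel₀ hkne, Real.rpow_neg_one]
    exact inv_mul_cancel₀ hz.ne'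
  have hN0 : 0 < NN k x0 := NN_pos hk hk0 hx00
  obtain ⟨c0, hc0, hc0N⟩ := sphere_of x0 hN0
  have hSne : Sph.Nonempty :=
    ⟨c0 • x0, by rw [hSph]; simp only [Set.mem_setOf_eq, NN_smul]; exact hc0N⟩
  obtain ⟨z, hzS, hzmin⟩ := hScompact.exists_isMinOn hSne (FF_cont (E := E)).continuousOn
  set μ := (k : ℝ) * FF E z with hμ
  have hzN : NN k z = 1 := hzS
  have glb : ∀ y : V → ℝ, μ * NN k y ≤ (k : ℝ) * FF E y := by
    intro y
    rcases (NN_nonneg hk y).eq_or_lt with h | h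
    · have hy0 : y = 0 := by
        by_contra hy
        exact (NN_pos hk hk0 hy).ne' h.symm
      rw [hy0, FF_zero hU hk0]
      simp [NN, zero_pow hk0.ne']
    · obtain ⟨c, hc, hcN⟩ := sphere_of y h
      have hmem : (c • y) ∈ Sph := by
        rw [hSph]; simp only [Set.mem_setOf_eq, NN_smul]; exact hcN
      have hle : FF E z ≤ FF E (c • y) := hzmin hmem
      have : μ ≤ (k : ℝ) * (c ^ k * FF E y) := by
        rw [← FF_smul hU]
        exact mul_le_mul_of_nonneg_left hle (Nat.cast_nonneg k)
      have hck : 0 < c ^ k := pow_pos hc k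
      have h2 : μ * (c ^ k * NN k y) ≤ c ^ k * ((k : ℝ) * FF E y) := by
        rw [hcN, mul_one]; linarith
      rw [show μ * (c ^ k * NN k y) = c ^ k * (μ * NN k y) by ring] at h2
      exact le_of_mul_le_mul_left h2 hck
  have hz0 : z ≠ 0 := by
    intro h
    rw [h] at hzN
    simp [NN, zero_pow hk0.ne'] at hzN
  have heig : isEig E k μ z := by
    intro v
    set A := ∑ e ∈ E.filter (fun e => v ∉ e), ∏ w ∈ e, z w with hA
    set B := ∑ e ∈ E.filter (fun e => v ∈ e), ∏ w ∈ e.erase v, z w with hB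
    set C := ∑ w ∈ Finset.univ.erase v, z w ^ k with hC
    have hFupd : ∀ t, FF E (Function.update z v t) = A + B * t := by
      intro t
      rw [FF, ← Finset.sum_filter_add_sum_filter_not E (fun e => v ∈ e)]
      have h1 : ∑ e ∈ E.filter (fun e => v ∈ e), ∏ w ∈ e, Function.update z v t w
          = B * t := by
        rw [hB, Finset.sum_mul]
        refine Finset.sum_congr rfl fun e he => ?_
        rw [Finset.mem_filter] at he
        rw [← Finset.mul_prod_erase e _ he.2, Function.update_self]
        rw [mul_comm]
        congr 1
        refine Finset.prod_congr rfl fun w hw => ?_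
        exact Function.update_of_ne (Finset.ne_of_mem_erase hw) _ _
      have h2 : ∑ e ∈ E.filter (fun e => ¬ v ∈ e), ∏ w ∈ e, Function.update z v t w
          = A := by
        rw [hA]
        refine Finset.sum_congr rfl fun e he => ?_
        rw [Finset.mem_filter] at he
        refine Finset.prod_congr rfl fun w hw => ?_
        refine Function.update_of_ne ?_ _ _
        rintro rfl
        exact he.2 hw
      rw [h1, h2, add_comm]
    have hNupd : ∀ t, NN k (Function.update z v t) = C + t ^ k := by
      intro t
      rw [NN, ← Finset.sum_erase_add _ _ (Finset.mem_univ v), Function.update_self]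
      congr 1
      refine Finset.sum_congr rfl fun w hw => ?_
      rw [Function.update_of_ne (Finset.ne_of_mem_erase hw)]
    set t0 := z v with ht0
    have hupd_self : Function.update z v t0 = z := Function.update_eq_self v z
    have hdenom : C + t0 ^ k = 1 := by rw [← hNupd t0, hupd_self]; exact hzN
    have hFz : A + B * t0 = FF E z := by rw [← hFupd t0, hupd_self]
    set g : ℝ → ℝ := fun t => ((k : ℝ) * (A + B * t)) / (C + t ^ k) with hg
    have hUopen : IsOpen {t : ℝ | 0 < C + t ^ k} :=
      isOpen_lt continuous_const (by continuity)
    have ht0U : t0 ∈ {t : ℝ | 0 < C + t ^ k} := by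
      simp only [Set.mem_setOf_eq, hdenom]; exact one_pos
    have hlocal : IsLocalMin g t0 := by
      refine Filter.eventually_of_mem (hUopen.mem_nhds ht0U) fun t ht => ?_
      simp only [Set.mem_setOf_eq] at ht
      have hgt : g t = ((k : ℝ) * FF E (Function.update z v t))
          / NN k (Function.update z v t) := by
        rw [hg, hFupd, hNupd]
      have hgt0 : g t0 = μ := by
        rw [hg]; simp only []
        rw [hdenom, div_one, hFz, hμ]
      rw [hgt0, hgt]
      rw [le_div_iff₀ (by rw [hNupd]; exact ht)]
      rw [hNupd]
      calc μ * (C + t ^ k) = μ * NN k (Function.update z v t) := by rw [hNupd]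
        _ ≤ (k : ℝ) * FF E (Function.update z v t) := glb _
    have hnum : HasDerivAt (fun t => (k : ℝ) * (A + B * t)) ((k : ℝ) * B) t0 := by
      have h1 : HasDerivAt (fun t : ℝ => A + B * t) B t0 := by
        simpa using ((hasDerivAt_id t0).const_mul B).const_add A
      simpa using h1.const_mul (k : ℝ)
    have hden : HasDerivAt (fun t : ℝ => C + t ^ k) ((k : ℝ) * t0 ^ (k - 1)) t0 :=
      (hasDerivAt_pow k t0).const_add C
    have hd : HasDerivAt g
        (((k : ℝ) * B * (C + t0 ^ k) - ((k : ℝ) * (A + B * t0)) * ((k : ℝ) * t0 ^ (k - 1)))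
          / (C + t0 ^ k) ^ 2) t0 :=
      hnum.div hden (by rw [hdenom]; exact one_ne_zero)
    have hderiv0 := hlocal.deriv_eq_zero
    rw [hd.deriv] at hderiv0
    rw [hdenom] at hderiv0
    simp only [mul_one, one_pow, div_one] at hderiv0
    have hBeq : B = μ * t0 ^ (k - 1) := by
      have hkne : (k : ℝ) ≠ 0 := Nat.cast_ne_zero.mpr hk0.ne'
      have : (k : ℝ) * B = (k : ℝ) * ((k : ℝ) * (A + B * t0) * t0 ^ (k - 1)) := by
        linear_combination hderiv0
      have := mul_left_cancel₀ hkne this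
      rw [this, hFz, hμ]
    exact hBeq
  have hμspec : μ ∈ specH E k := ⟨z, hz0, heig⟩
  have hlam_le : lamMin E k ≤ μ := csInf_le (specBdd hU) hμspec
  intro y
  calc lamMin E k * NN k y ≤ μ * NN k y :=
        mul_le_mul_of_nonneg_right hlam_le (NN_nonneg hk y)
    _ ≤ (k : ℝ) * FF E y := glb y

end Aux

/-- If `G = G₀(u) ⋄ H(u)` with `H` odd-bipartite and `x` is a first eigenvector of `G`, then `∏_{v ∈ e} x v ≤ 0` for every edge `e` of `H`. -/
theorem stmt4 [Fintype V] [DecidableEq V]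
    (V0 VH : Finset V) (u : V) (E0 EH : Finset (Finset V)) (k : ℕ)
    (hk : Even k) (hk0 : 0 < k)
    (hI : V0 ∩ VH = {u}) (hcover : V0 ∪ VH = Finset.univ)
    (hE0 : ∀ e ∈ E0, e ⊆ V0) (hEH : ∀ e ∈ EH, e ⊆ VH)
    (hU : Uniform (E0 ∪ EH) k) (hconn : HConnected (E0 ∪ EH))
    (hE0ne : E0.Nonempty) (hEHne : EH.Nonempty)
    (hodd : ∃ S ⊆ VH, ∀ e ∈ EH, Odd ((e ∩ S).card))
    (x : V → ℝ) (hx : IsFirstEigvec (E0 ∪ EH) k x) :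
    ∀ e ∈ EH, (∏ v ∈ e, x v) ≤ 0 := by
  classical
  obtain ⟨hx0, hev⟩ := hx
  have hk1 : 1 ≤ k := hk0
  have hk2 : 2 ≤ k := by
    rcases hk with ⟨m, hm⟩; omega
  have huVH : u ∈ VH := by
    have : u ∈ V0 ∩ VH := by rw [hI]; exact Finset.mem_singleton_self u
    exact (Finset.mem_inter.mp this).2
  -- disjointness of the edge sets
  have hdisj : Disjoint E0 EH := by
    rw [Finset.disjoint_left]
    intro e he0 heH
    have hsub : e ⊆ {u} := by
      rw [← hI]; exact Finset.subset_inter (hE0 e he0) (hEH e heH)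
    have h1 : e.card ≤ 1 := le_trans (Finset.card_le_card hsub) (by simp)
    have h2 := hU e (Finset.mem_union_left _ he0)
    omega
  -- choose an odd bipartition avoiding u
  obtain ⟨S, hSsub, hSodd⟩ := hodd
  set S' := if u ∈ S then VH \ S else S with hS'
  have huS' : u ∉ S' := by
    by_cases hu : u ∈ S
    · simp [hS', hu]
    · simp [hS', hu]
  have hS'odd : ∀ e ∈ EH, Odd ((e ∩ S').card) := by
    intro e he
    by_cases hu : u ∈ S
    · have hesub := hEH e he
      have hrw : e ∩ (VH \ S) = e \ S := by
        ext a
        simp only [Finset.mem_inter, Finset.mem_sdiff]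
        exact ⟨fun h => ⟨h.1, h.2.2⟩, fun h => ⟨h.1, hesub h.1, h.2⟩⟩
      have hScard : (e ∩ S).card + (e \ S).card = e.card :=
        Finset.card_inter_add_card_sdiff e S
      have hcard : e.card = k := hU e (Finset.mem_union_right _ he)
      have hoddS := hSodd e he
      have : (e \ S).card = k - (e ∩ S).card := by omega
      simp only [hS', if_pos hu, hrw, this]
      exact Nat.Even.sub_odd (by omega) hk hoddS
    · simp only [hS', if_neg hu]
      exact hSodd e he
  -- the comparison vector y
  set δ : ℝ := if 0 ≤ x u then 1 else -1 with hδ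
  have hδ1 : δ = 1 ∨ δ = -1 := by
    by_cases h : 0 ≤ x u
    · left; simp [hδ, h]
    · right; simp [hδ, h]
  have hδk : δ ^ k = 1 := by
    rcases hδ1 with h | h
    · rw [h, one_pow]
    · rw [h, hk.neg_one_pow]
  have hδu : δ * x u = |x u| := by
    by_cases h : 0 ≤ x u
    · rw [hδ, if_pos h, one_mul, abs_of_nonneg h]
    · rw [hδ, if_neg h, abs_of_neg (lt_of_not_ge h)]; ring
  set y : V → ℝ := fun v =>
    if v ∈ VH.erase u then (if v ∈ S' then -|x v| else |x v|) else δ * x v with hy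
  have hyV0 : ∀ v ∈ V0, y v = δ * x v := by
    intro v hv
    have : v ∉ VH.erase u := by
      intro h
      rw [Finset.mem_erase] at h
      have : v ∈ V0 ∩ VH := Finset.mem_inter.mpr ⟨hv, h.2⟩
      rw [hI, Finset.mem_singleton] at this
      exact h.1 this
    simp only [hy, if_neg this]
  have hyH : ∀ v ∈ VH, y v = (if v ∈ S' then (-1 : ℝ) else 1) * |x v| := by
    intro v hv
    by_cases hvu : v = u
    · subst hvu
      have h1 : v ∉ VH.erase v := Finset.notMem_erase v VH
      simp only [hy, if_neg h1, if_neg huS', one_mul]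
      exact hδu
    · have h1 : v ∈ VH.erase u := Finset.mem_erase.mpr ⟨hvu, hv⟩
      simp only [hy, if_pos h1]
      by_cases hs : v ∈ S'
      · simp [hs]
      · simp [hs]
  have hyabs : ∀ v, y v ^ k = x v ^ k := by
    intro v
    have habs : |y v| = |x v| := by
      by_cases h1 : v ∈ VH.erase u
      · simp only [hy, if_pos h1]
        by_cases hs : v ∈ S' <;> simp [hs, abs_abs]
      · simp only [hy, if_neg h1, abs_mul]
        rcases hδ1 with h | h <;> simp [h]
    rw [← Even.pow_abs hk (y v), habs, Even.pow_abs hk]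
  have hNy : NN k y = NN k x := Finset.sum_congr rfl fun v _ => hyabs v
  have hsplit : ∀ w : V → ℝ, FF (E0 ∪ EH) w = FF E0 w + FF EH w :=
    fun w => Finset.sum_union hdisj
  have hF0 : FF E0 y = FF E0 x := by
    refine Finset.sum_congr rfl fun e he => ?_
    have hcard : e.card = k := hU e (Finset.mem_union_left _ he)
    calc ∏ v ∈ e, y v = ∏ v ∈ e, (δ * x v) :=
          Finset.prod_congr rfl fun v hv => hyV0 v (hE0 e he hv)
      _ = δ ^ e.card * ∏ v ∈ e, x v := by
          rw [Finset.prod_mul_distrib, Finset.prod_const]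
      _ = ∏ v ∈ e, x v := by rw [hcard, hδk, one_mul]
  have hFHe : ∀ e ∈ EH, ∏ v ∈ e, y v = -∏ v ∈ e, |x v| := by
    intro e he
    calc ∏ v ∈ e, y v = ∏ v ∈ e, ((if v ∈ S' then (-1 : ℝ) else 1) * |x v|) :=
          Finset.prod_congr rfl fun v hv => hyH v (hEH e he hv)
      _ = (∏ v ∈ e, (if v ∈ S' then (-1 : ℝ) else 1)) * ∏ v ∈ e, |x v| :=
          Finset.prod_mul_distrib
      _ = -∏ v ∈ e, |x v| := by
          have hsign : (∏ v ∈ e, (if v ∈ S' then (-1 : ℝ) else 1)) = -1 := by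
            rw [Finset.prod_ite (fun _ => (-1 : ℝ)) (fun _ => (1 : ℝ))]
            rw [Finset.prod_const, Finset.prod_const, one_pow, mul_one]
            rw [Finset.filter_mem_eq_inter]
            exact (hS'odd e he).neg_one_pow
          rw [hsign]; ring
  have hFH : FF EH y = -∑ e ∈ EH, ∏ v ∈ e, |x v| := by
    rw [FF, ← Finset.sum_neg_distrib]
    exact Finset.sum_congr rfl hFHe
  -- the variational inequality applied to y
  have hspecne : (specH (E0 ∪ EH) k).Nonempty := ⟨lamMin (E0 ∪ EH) k, x, hx0, hev⟩
  have hB := lemB hU hk hk0 hspecne y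
  have hA := lemA hU hk1 hev
  rw [hNy] at hB
  rw [← hA] at hB
  rw [hsplit x, hsplit y, hF0, hFH] at hB
  have hkpos : (0 : ℝ) < k := Nat.cast_pos.mpr hk0
  have hmain : FF EH x + ∑ e ∈ EH, ∏ v ∈ e, |x v| ≤ 0 := by
    nlinarith [hB]
  have hterm : ∀ e ∈ EH, 0 ≤ (∏ v ∈ e, x v) + ∏ v ∈ e, |x v| := by
    intro e he
    rw [← Finset.abs_prod]
    linarith [neg_abs_le (∏ v ∈ e, x v)]
  have hsum0 : ∑ e ∈ EH, ((∏ v ∈ e, x v) + ∏ v ∈ e, |x v|) = 0 := by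
    have hle : ∑ e ∈ EH, ((∏ v ∈ e, x v) + ∏ v ∈ e, |x v|) ≤ 0 := by
      rw [Finset.sum_add_distrib]
      exact hmain
    exact le_antisymm hle (Finset.sum_nonneg hterm)
  intro e he
  have := (Finset.sum_eq_zero_iff_of_nonneg hterm).mp hsum0 e he
  have habs : (0 : ℝ) ≤ ∏ v ∈ e, |x v| := Finset.prod_nonneg fun v _ => abs_nonneg _
  linarith
end

section
/- Let k be even and G = G_0(u) ⋄ H(u) be a connected k-uniform hypergraph which is the coalescence of G_0 and H at u. If x is a first eigenvector of G with x_u = 0, then Σ_{e ∈ E_{G_0}(u)} Π_{v ∈ e\{u}} x_v = 0 and Σ_{e ∈ E_H(u)} Π_{v ∈ e\{u}} x_v = 0. -/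
/-!
For even `k`, the least H-eigenvalue is the minimum of the Rayleigh quotient
`k ∑_e ∏_{w ∈ e} x_w / ∑_v x_v ^ k`, and every vector attaining it is an eigenvector for it
(Lagrange multipliers). Negate `x` on `V(H) ∖ {u}`: both forms are unchanged, since `k` is even
and the edges of `H` through `u` contribute `0` because `x_u = 0`. So the flipped vector `y` is
again a first eigenvector. With `S₀, S_H` the two sums of the statement, the eigen-equation at `u`
gives `S₀ + S_H = 0` for `x` and `S₀ - S_H = 0` for `y`, as each edge of `H` through `u` has an odd
number `k - 1` of negated vertices.
-/

open Finset BigOperators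

variable {V : Type*}

noncomputable def powSum [Fintype V] (k : ℕ) (x : V → ℝ) : ℝ :=
  ∑ v, x v ^ k

/-- The form with `A(G) x^k = k * edgeForm E x` for the adjacency tensor of a `k`-uniform `E`. -/
noncomputable def edgeForm (E : Finset (Finset V)) (x : V → ℝ) : ℝ :=
  ∑ e ∈ E, ∏ w ∈ e, x w

section RayleighQuotient

variable {E : Finset (Finset V)} {k : ℕ}

theorem powSum_pos [Fintype V] (hk : Even k) {x : V → ℝ} (hx : x ≠ 0) : 0 < powSum k x := by
  obtain ⟨v, hv⟩ := Function.ne_iff.mp hx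
  exact (hk.pow_pos hv).trans_le
    (single_le_sum (fun w _ => hk.pow_nonneg (x w)) (mem_univ v))

theorem powSum_smul [Fintype V] (k : ℕ) (c : ℝ) (x : V → ℝ) :
    powSum k (c • x) = c ^ k * powSum k x := by
  simp only [powSum, Pi.smul_apply, smul_eq_mul, mul_pow, mul_sum]

theorem edgeForm_smul [DecidableEq V] (hU : Uniform E k) (c : ℝ) (x : V → ℝ) :
    edgeForm E (c • x) = c ^ k * edgeForm E x := by
  simp only [edgeForm, Pi.smul_apply, smul_eq_mul, mul_sum]
  exact sum_congr rfl fun e he => by rw [prod_mul_distrib, prod_const, hU e he]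

theorem edgeForm_union [DecidableEq V] {F : Finset (Finset V)} (h : Disjoint E F) (x : V → ℝ) :
    edgeForm (E ∪ F) x = edgeForm E x + edgeForm F x :=
  sum_union h

theorem powSum_update [Fintype V] [DecidableEq V] (k : ℕ) (x : V → ℝ) (v : V) (t : ℝ) :
    powSum k (Function.update x v t) = t ^ k + ∑ w ∈ univ \ {v}, x w ^ k := by
  rw [powSum, ← sum_update_of_mem (mem_univ v)]
  exact sum_congr rfl fun w _ => Function.apply_update (fun _ a => a ^ k) x v t w

theorem edgeForm_update [DecidableEq V] (E : Finset (Finset V)) (x : V → ℝ) (v : V) (t : ℝ) :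
    edgeForm E (Function.update x v t) =
      edgeForm (E.filter (v ∉ ·)) x + t * ∑ e ∈ E.filter (v ∈ ·), ∏ w ∈ e.erase v, x w := by
  rw [edgeForm, ← sum_filter_not_add_sum_filter E (v ∈ ·), edgeForm, mul_sum]
  congr 1
  · refine sum_congr rfl fun e he => prod_congr rfl fun w hw => ?_
    exact Function.update_of_ne (ne_of_mem_of_not_mem hw (mem_filter.mp he).2) _ _
  · refine sum_congr rfl fun e he => ?_
    rw [← mul_prod_erase e _ (mem_filter.mp he).2, Function.update_self]
    exact congrArg _ (prod_congr rfl fun w hw => Function.update_of_ne (ne_of_mem_erase hw) _ _)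

theorem isEig.mul_powSum_eq [Fintype V] [DecidableEq V] {μ : ℝ} {z : V → ℝ} (hk : k ≠ 0)
    (hU : Uniform E k) (h : isEig E k μ z) : μ * powSum k z = k * edgeForm E z := by
  have hpow : ∀ v, z v * z v ^ (k - 1) = z v ^ k := fun v => by
    rw [← pow_succ', Nat.sub_add_cancel (Nat.one_le_iff_ne_zero.mpr hk)]
  calc μ * powSum k z = ∑ v, z v * (μ * z v ^ (k - 1)) := by
        simp only [powSum, mul_sum, ← hpow]; exact sum_congr rfl fun v _ => by ring
    _ = ∑ v, ∑ e ∈ E.filter (v ∈ ·), ∏ w ∈ e, z w := by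
        refine sum_congr rfl fun v _ => ?_
        rw [← h v, mul_sum]
        exact sum_congr rfl fun e he => mul_prod_erase e z (mem_filter.mp he).2
    _ = ∑ e ∈ E, ∑ v ∈ e, ∏ w ∈ e, z w :=
        sum_comm' fun v e => by simp only [mem_univ, mem_filter, true_and, and_comm]
    _ = k * edgeForm E z := by
        rw [edgeForm, mul_sum]
        exact sum_congr rfl fun e he => by rw [sum_const, hU e he, nsmul_eq_mul]

/-- Lagrange multiplier rule: the minimiser `z` is critical along every coordinate line. -/
theorem isEig_of_forall_mul_powSum_le [Fintype V] [DecidableEq V] {μ : ℝ} {z : V → ℝ}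
    (hk : k ≠ 0) (hz : μ * powSum k z = k * edgeForm E z)
    (hmin : ∀ w, μ * powSum k w ≤ k * edgeForm E w) : isEig E k μ z := by
  intro v
  set B := ∑ e ∈ E.filter (v ∈ ·), ∏ w ∈ e.erase v, z w
  set g : ℝ → ℝ := fun t =>
    k * edgeForm E (Function.update z v t) - μ * powSum k (Function.update z v t)
  have hg_min : IsLocalMin g (z v) := by
    refine IsMinOn.isLocalMin (s := Set.univ) (fun t _ => ?_) Filter.univ_mem
    show g (z v) ≤ g t
    simp only [g, Function.update_eq_self]
    linarith [hmin (Function.update z v t)]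
  have hg_deriv : HasDerivAt g (k * B - μ * (k * z v ^ (k - 1))) (z v) := by
    simp only [g, edgeForm_update, powSum_update]
    exact ((((hasDerivAt_id _).mul_const B).const_add _).const_mul _).sub
      (((hasDerivAt_pow k _).add_const _).const_mul _) |>.congr_deriv (by simp)
  have := hg_min.hasDerivAt_eq_zero hg_deriv
  have hk' : (k : ℝ) ≠ 0 := Nat.cast_ne_zero.mpr hk
  exact mul_left_cancel₀ hk' (by linarith)

theorem isCompact_setOf_powSum_eq_one [Fintype V] (hk : Even k) (hk0 : k ≠ 0) :
    IsCompact {x : V → ℝ | powSum k x = 1} := by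
  refine Metric.isCompact_of_isClosed_isBounded
    (isClosed_eq (continuous_finsetSum _ fun v _ => (continuous_apply v).pow k) continuous_const)
    ((Metric.isBounded_closedBall (x := 0) (r := 1)).subset fun x hx => ?_)
  rw [Metric.mem_closedBall, dist_pi_le_iff zero_le_one]
  intro v
  have hv : x v ^ k ≤ 1 :=
    hx ▸ single_le_sum (fun w _ => hk.pow_nonneg (x w)) (mem_univ v)
  rw [Pi.zero_apply, dist_zero_right, Real.norm_eq_abs]
  exact (pow_le_one_iff_of_nonneg (abs_nonneg _) hk0).mp (hk.pow_abs (x v) ▸ hv)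

/-- `μ` is the minimum of the Rayleigh quotient `k * edgeForm E x / powSum k x`: it is attained on
the compact sphere `powSum k x = 1` and transported to all `x` by homogeneity. -/
theorem exists_forall_mul_powSum_le [Fintype V] [DecidableEq V] [Nonempty V] (hk : Even k)
    (hk0 : k ≠ 0) (hU : Uniform E k) :
    ∃ μ : ℝ, ∃ z : V → ℝ, z ≠ 0 ∧ μ * powSum k z = k * edgeForm E z ∧
      ∀ w, μ * powSum k w ≤ k * edgeForm E w := by
  obtain ⟨v⟩ := ‹Nonempty V›
  have hsphere : Pi.single v 1 ∈ {x : V → ℝ | powSum k x = 1} := by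
    simp [powSum, Pi.single_apply, zero_pow hk0]
  obtain ⟨z, hz, hzmin⟩ := (isCompact_setOf_powSum_eq_one hk hk0).exists_isMinOn ⟨_, hsphere⟩
    (continuous_finsetSum _ fun e _ => continuous_finsetProd e fun a _ => continuous_apply a
      ).continuousOn
  refine ⟨k * edgeForm E z, z, fun h => ?_, by rw [hz.out, mul_one], fun w => ?_⟩
  · simp [h, powSum, zero_pow hk0] at hz
  rcases eq_or_ne w 0 with rfl | hw
  · have h0 : (0 : V → ℝ) = (0 : ℝ) • (0 : V → ℝ) := (zero_smul ℝ _).symm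
    rw [h0, powSum_smul, edgeForm_smul hU, zero_pow hk0]
    simp
  have hpos := powSum_pos hk hw
  set c : ℝ := (powSum k w)⁻¹ ^ (k : ℝ)⁻¹
  have hc : c ^ k = (powSum k w)⁻¹ := Real.rpow_inv_natCast_pow (inv_nonneg.mpr hpos.le) hk0
  have hcw : edgeForm E z ≤ c ^ k * edgeForm E w := by
    rw [← edgeForm_smul hU]
    refine hzmin (show powSum k (c • w) = 1 from ?_)
    rw [powSum_smul, hc, inv_mul_cancel₀ hpos.ne']
  rw [hc, inv_mul_eq_div, le_div_iff₀ hpos] at hcw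
  calc k * edgeForm E z * powSum k w = k * (edgeForm E z * powSum k w) := by ring
    _ ≤ k * edgeForm E w := by gcongr

theorem lamMin_eq_of_forall_mul_powSum_le [Fintype V] [DecidableEq V] (hk : Even k) (hk0 : k ≠ 0)
    (hU : Uniform E k) {μ : ℝ} {z : V → ℝ} (hz0 : z ≠ 0) (hz : μ * powSum k z = k * edgeForm E z)
    (hmin : ∀ w, μ * powSum k w ≤ k * edgeForm E w) : lamMin E k = μ := by
  refine IsLeast.csInf_eq ⟨⟨z, hz0, isEig_of_forall_mul_powSum_le hk0 hz hmin⟩, ?_⟩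
  rintro ν ⟨w, hw0, hw⟩
  refine le_of_mul_le_mul_right ?_ (powSum_pos hk hw0)
  rw [hw.mul_powSum_eq hk0 hU]
  exact hmin w

theorem lamMin_mul_powSum_le [Fintype V] [DecidableEq V] [Nonempty V] (hk : Even k) (hk0 : k ≠ 0)
    (hU : Uniform E k) (w : V → ℝ) : lamMin E k * powSum k w ≤ k * edgeForm E w := by
  obtain ⟨μ, z, hz0, hz, hmin⟩ := exists_forall_mul_powSum_le hk hk0 hU
  rw [lamMin_eq_of_forall_mul_powSum_le hk hk0 hU hz0 hz hmin]
  exact hmin w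

theorem isEig_lamMin_of_mul_powSum_eq [Fintype V] [DecidableEq V] [Nonempty V] (hk : Even k)
    (hk0 : k ≠ 0) (hU : Uniform E k) {y : V → ℝ}
    (hy : lamMin E k * powSum k y = k * edgeForm E y) : isEig E k (lamMin E k) y :=
  isEig_of_forall_mul_powSum_le hk0 hy (lamMin_mul_powSum_le hk hk0 hU)

end RayleighQuotient

section SignFlip

variable [DecidableEq V]

theorem prod_piecewise_neg (e t : Finset V) (x : V → ℝ) :
    ∏ w ∈ e, t.piecewise (-x) x w = (-1) ^ #(e ∩ t) * ∏ w ∈ e, x w := by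
  rw [prod_piecewise, ← prod_inter_mul_prod_sdiff e t x]
  simp only [Pi.neg_apply, prod_neg]
  ring

theorem powSum_piecewise_neg [Fintype V] {k : ℕ} (hk : Even k) (t : Finset V) (x : V → ℝ) :
    powSum k (t.piecewise (-x) x) = powSum k x := by
  refine sum_congr rfl fun w _ => ?_
  by_cases hw : w ∈ t <;> simp [hw, hk.neg_pow]

variable {V0 VH e : Finset V} {u : V}

theorem prod_piecewise_neg_of_subset_left (hI : V0 ∩ VH = {u}) (he : e ⊆ V0) (x : V → ℝ) :
    ∏ w ∈ e, (VH.erase u).piecewise (-x) x w = ∏ w ∈ e, x w := by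
  have hempty : e ∩ VH.erase u = ∅ := by
    ext w
    simp only [mem_inter, mem_erase, notMem_empty, iff_false]
    rintro ⟨hw, hwu, hwH⟩
    exact hwu (mem_singleton.mp (hI ▸ mem_inter.mpr ⟨he hw, hwH⟩))
  rw [prod_piecewise_neg, hempty, card_empty, pow_zero, one_mul]

theorem prod_piecewise_neg_of_subset_right (he : e ⊆ VH) (x : V → ℝ) :
    ∏ w ∈ e, (VH.erase u).piecewise (-x) x w = (-1) ^ #(e.erase u) * ∏ w ∈ e, x w := by
  rw [prod_piecewise_neg, inter_erase, inter_eq_left.mpr he]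

end SignFlip

section Coalescence

variable [DecidableEq V] {V0 VH : Finset V} {u : V} {E0 EH : Finset (Finset V)} {k : ℕ}

theorem disjoint_of_inter_eq_singleton (hk : 2 ≤ k) (hI : V0 ∩ VH = {u})
    (hE0 : ∀ e ∈ E0, e ⊆ V0) (hEH : ∀ e ∈ EH, e ⊆ VH) (hU : Uniform (E0 ∪ EH) k) :
    Disjoint E0 EH := by
  refine disjoint_left.mpr fun e he0 heH => ?_
  have hcard := card_le_card (subset_inter (hE0 e he0) (hEH e heH))
  rw [hI, card_singleton] at hcard
  have := hU e (mem_union_left _ he0)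
  omega

theorem edgeForm_piecewise_neg_left (hI : V0 ∩ VH = {u}) (hE0 : ∀ e ∈ E0, e ⊆ V0)
    (x : V → ℝ) : edgeForm E0 ((VH.erase u).piecewise (-x) x) = edgeForm E0 x :=
  sum_congr rfl fun e he => prod_piecewise_neg_of_subset_left hI (hE0 e he) x

theorem edgeForm_piecewise_neg_right (hk : Even k) (hEH : ∀ e ∈ EH, e ⊆ VH) (hU : Uniform EH k)
    {x : V → ℝ} (hxu : x u = 0) : edgeForm EH ((VH.erase u).piecewise (-x) x) = edgeForm EH x := by
  refine sum_congr rfl fun e he => ?_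
  rw [prod_piecewise_neg_of_subset_right (hEH e he)]
  by_cases hu : u ∈ e
  · rw [prod_eq_zero hu hxu, mul_zero]
  · rw [erase_eq_of_notMem hu, hU e he, hk.neg_one_pow, one_mul]

theorem sum_prod_erase_piecewise_neg_left (hI : V0 ∩ VH = {u}) (hE0 : ∀ e ∈ E0, e ⊆ V0)
    (x : V → ℝ) :
    ∑ e ∈ E0.filter (u ∈ ·), ∏ w ∈ e.erase u, (VH.erase u).piecewise (-x) x w =
      ∑ e ∈ E0.filter (u ∈ ·), ∏ w ∈ e.erase u, x w :=
  sum_congr rfl fun e he =>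
    prod_piecewise_neg_of_subset_left hI ((erase_subset u e).trans (hE0 e (mem_filter.mp he).1)) x

theorem sum_prod_erase_piecewise_neg_right (hk : Even k) (hk0 : k ≠ 0) (hEH : ∀ e ∈ EH, e ⊆ VH)
    (hU : Uniform EH k) (x : V → ℝ) :
    ∑ e ∈ EH.filter (u ∈ ·), ∏ w ∈ e.erase u, (VH.erase u).piecewise (-x) x w =
      -∑ e ∈ EH.filter (u ∈ ·), ∏ w ∈ e.erase u, x w := by
  rw [← sum_neg_distrib]
  refine sum_congr rfl fun e he => ?_
  obtain ⟨heH, hu⟩ := mem_filter.mp he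
  have hodd : Odd #(e.erase u) := by
    rw [card_erase_of_mem hu, hU e heH]
    exact Nat.Even.sub_odd (Nat.one_le_iff_ne_zero.mpr hk0) hk odd_one
  rw [prod_piecewise_neg_of_subset_right ((erase_subset u e).trans (hEH e heH)), erase_idem,
    hodd.neg_one_pow, neg_one_mul]

end Coalescence

theorem stmt5_general [Fintype V] [DecidableEq V]
    (V0 VH : Finset V) (u : V) (E0 EH : Finset (Finset V)) (k : ℕ)
    (hk : Even k) (hk0 : 0 < k)
    (hI : V0 ∩ VH = {u})
    (hE0 : ∀ e ∈ E0, e ⊆ V0) (hEH : ∀ e ∈ EH, e ⊆ VH)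
    (hU : Uniform (E0 ∪ EH) k)
    (x : V → ℝ) (hx : IsFirstEigvec (E0 ∪ EH) k x) (hxu : x u = 0) :
    (∑ e ∈ E0.filter (fun e => u ∈ e), ∏ w ∈ e.erase u, x w) = 0 ∧
    (∑ e ∈ EH.filter (fun e => u ∈ e), ∏ w ∈ e.erase u, x w) = 0 := by
  have : Nonempty V := ⟨u⟩
  have hk2 : 2 ≤ k := by obtain ⟨m, rfl⟩ := hk; omega
  have hUH : Uniform EH k := fun e he => hU e (mem_union_right _ he)
  have hdisj := disjoint_of_inter_eq_singleton hk2 hI hE0 hEH hU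
  have hsum_eq_zero : ∀ z, isEig (E0 ∪ EH) k (lamMin (E0 ∪ EH) k) z → z u = 0 →
      (∑ e ∈ E0.filter (u ∈ ·), ∏ w ∈ e.erase u, z w) +
        ∑ e ∈ EH.filter (u ∈ ·), ∏ w ∈ e.erase u, z w = 0 := fun z hz hzu => by
    rw [← sum_union (disjoint_filter_filter hdisj), ← filter_union, hz u, hzu,
      zero_pow (by omega), mul_zero]
  set y := (VH.erase u).piecewise (-x) x
  have hy : isEig (E0 ∪ EH) k (lamMin (E0 ∪ EH) k) y := by
    refine isEig_lamMin_of_mul_powSum_eq hk hk0.ne' hU ?_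
    rw [powSum_piecewise_neg hk, edgeForm_union hdisj, edgeForm_piecewise_neg_left hI hE0,
      edgeForm_piecewise_neg_right hk hEH hUH hxu, ← edgeForm_union hdisj,
      hx.2.mul_powSum_eq hk0.ne' hU]
  have hplus := hsum_eq_zero x hx.2 hxu
  have hminus := hsum_eq_zero y hy (by simp [y, hxu])
  rw [sum_prod_erase_piecewise_neg_left hI hE0,
    sum_prod_erase_piecewise_neg_right hk hk0.ne' hEH hUH] at hminus
  constructor <;> linarith

/-- If `x` is a first eigenvector of the coalescence `G = G₀(u) ⋄ H(u)` with `x u = 0`, then the sums `∑_{e ∈ E_{G₀}(u)} ∏_{v ∈ e∖{u}} x v` and `∑_{e ∈ E_H(u)} ∏_{v ∈ e∖{u}} x v` both vanish. -/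
theorem stmt5 [Fintype V] [DecidableEq V]
    (V0 VH : Finset V) (u : V) (E0 EH : Finset (Finset V)) (k : ℕ)
    (hk : Even k) (hk0 : 0 < k)
    (hI : V0 ∩ VH = {u}) (hcover : V0 ∪ VH = Finset.univ)
    (hE0 : ∀ e ∈ E0, e ⊆ V0) (hEH : ∀ e ∈ EH, e ⊆ VH)
    (hU : Uniform (E0 ∪ EH) k) (hconn : HConnected (E0 ∪ EH))
    (hE0ne : E0.Nonempty) (hEHne : EH.Nonempty)
    (x : V → ℝ) (hx : IsFirstEigvec (E0 ∪ EH) k x) (hxu : x u = 0) :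
    (∑ e ∈ E0.filter (fun e => u ∈ e), ∏ w ∈ e.erase u, x w) = 0 ∧
    (∑ e ∈ EH.filter (fun e => u ∈ e), ∏ w ∈ e.erase u, x w) = 0 :=
  stmt5_general V0 VH u E0 EH k hk hk0 hI hE0 hEH hU x hx hxu
end
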